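/- Let n be an even number having an odd prime divisor. Then the largest eigenvalue (distance spectral radius) of the distance matrix of the unitary Cayley graph X_n equals 5n/2 − 2(φ(n) + 1). -/

import Mathlib

open scoped Classical

/-- The integral circulant graph `ICG_n(D)`: vertices `0,…,n-1` (as `ZMod n`), with `a ~ b` iff
`gcd(a-b, n) ∈ D`. -/
def ICG (n : ℕ) (D : Finset ℕ) : SimpleGraph (ZMod n) where
  Adj a b := a ≠ b ∧ Int.gcd ((a.val : ℤ) - (b.val : ℤ)) n ∈ D
  symm := by
    constructor
    rintro a b ⟨hne, h⟩
    refine ⟨hne.symm, ?_⟩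
    rwa [show ((b.val : ℤ) - a.val) = -((a.val : ℤ) - b.val) by ring, Int.neg_gcd]
  loopless := by constructor; rintro a ⟨h, -⟩; exact h rfl

/-- The distance matrix of a graph. -/
noncomputable def distMatrix {V : Type} [Fintype V] (G : SimpleGraph V) : Matrix V V ℝ :=
  Matrix.of fun i j => (G.dist i j : ℝ)

/-- The distance energy: the sum of the absolute values of the eigenvalues (with multiplicity)
of the distance matrix, i.e. of the roots of its characteristic polynomial. -/
noncomputable def distEnergy {V : Type} [Fintype V] [DecidableEq V] (G : SimpleGraph V) : ℝ :=
  ((distMatrix G).charpoly.roots.map fun x => |x|).sum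

/-!
For even `n` the distance between `a` and `b` in `X_n` depends only on `c = a - b`: it is `1` if
`c` is a unit, `2` if `c ≠ 0` is an even non-unit and `3` if `c` is an odd non-unit. Indeed units
are odd, so a common neighbour forces `c` to be even, while every even residue is a sum of two
units. Counting units (`φ n`) and even residues (`n / 2`) makes every row sum of the distance
matrix equal to `3n - 2 - 2φ(n) - n/2`. A nonnegative matrix with constant row sum `r` has the
all-ones eigenvector for `r`, and by Gershgorin no eigenvalue exceeds `r`. Parity in `ZMod n` is
read off through the reduction `ZMod.castHom heven (ZMod 2)`.
-/

namespace Matrix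

variable {ι K : Type*} [Fintype ι] [DecidableEq ι]

theorem mem_spectrum_of_forall_sum_eq [Field K] [Nonempty ι] {A : Matrix ι ι K} {r : K}
    (hA : ∀ i, ∑ j, A i j = r) : r ∈ spectrum K A := by
  rw [← spectrum_toLin', ← Module.End.hasEigenvalue_iff_mem_spectrum]
  refine Module.End.hasEigenvalue_of_hasEigenvector (x := fun _ => 1) ⟨?_, ?_⟩
  · rw [Module.End.mem_eigenspace_iff, toLin'_apply]
    ext i
    simp [mulVec, dotProduct, hA]
  · exact fun h => one_ne_zero (congrFun h (Classical.arbitrary ι))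

theorem norm_le_of_mem_spectrum_of_forall_sum_norm_le [NormedField K] {A : Matrix ι ι K}
    {r : ℝ} (hA : ∀ i, ∑ j, ‖A i j‖ ≤ r) {μ : K} (hμ : μ ∈ spectrum K A) :
    ‖μ‖ ≤ r := by
  rw [← spectrum_toLin', ← Module.End.hasEigenvalue_iff_mem_spectrum] at hμ
  obtain ⟨k, hk⟩ := eigenvalue_mem_ball hμ
  rw [mem_closedBall_iff_norm] at hk
  calc ‖μ‖ ≤ ‖A k k‖ + ‖μ - A k k‖ := norm_le_insert' μ (A k k)
    _ ≤ ‖A k k‖ + ∑ j ∈ Finset.univ.erase k, ‖A k j‖ := by gcongr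
    _ = ∑ j, ‖A k j‖ := Finset.add_sum_erase _ (fun j => ‖A k j‖) (Finset.mem_univ k)
    _ ≤ r := hA k

end Matrix

theorem Nat.coprime_mul_add_prod_primeFactors_not_dvd {k m n : ℕ} (hn : n ≠ 0)
    (hk : ∀ p, p.Prime → p ∣ n → p ∣ k → p ∣ m) :
    Nat.Coprime (k * m + ∏ p ∈ n.primeFactors with ¬ p ∣ m, p) n := by
  refine Nat.coprime_of_dvd fun p hp hsum hpn => ?_
  have hprod : p ∣ ∏ q ∈ n.primeFactors with ¬ q ∣ m, q ↔ ¬ p ∣ m := by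
    constructor
    · intro h
      obtain ⟨q, hq, hpq⟩ := (Prime.dvd_finsetProd_iff hp.prime _).mp h
      rw [Finset.mem_filter, Nat.mem_primeFactors] at hq
      rw [(Nat.prime_dvd_prime_iff_eq hp hq.1.1).mp hpq]
      exact hq.2
    · intro h
      exact Finset.dvd_prod_of_mem _
        (Finset.mem_filter.mpr ⟨Nat.mem_primeFactors.mpr ⟨hp, hpn, hn⟩, h⟩)
  by_cases hpm : p ∣ m
  · exact hprod.mp ((Nat.dvd_add_right (dvd_mul_of_dvd_right hpm k)).mp hsum) hpm
  · have hpkm : p ∣ k * m := (Nat.dvd_add_left (hprod.mpr hpm)).mp hsum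
    rcases (Nat.Prime.dvd_mul hp).mp hpkm with hpk | hpm'
    · exact hpm (hk p hp hpn hpk)
    · exact hpm hpm'

theorem ZMod.exists_isUnit_add_isUnit_eq {n : ℕ} [NeZero n] (c : ZMod n)
    (hc : 2 ∣ n → 2 ∣ c.val) : ∃ u v : ZMod n, IsUnit u ∧ IsUnit v ∧ u + v = c := by
  set R := ∏ p ∈ n.primeFactors with ¬ p ∣ c.val, p
  have hu : Nat.Coprime (2 * c.val + R) n := by
    refine Nat.coprime_mul_add_prod_primeFactors_not_dvd (NeZero.ne n) fun p hp hpn hp2 => ?_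
    rw [(Nat.prime_dvd_prime_iff_eq hp Nat.prime_two).mp hp2] at hpn ⊢
    exact hc hpn
  have hv : Nat.Coprime (1 * c.val + R) n :=
    Nat.coprime_mul_add_prod_primeFactors_not_dvd (NeZero.ne n)
      fun p hp _ hp1 => absurd hp1 hp.not_dvd_one
  -- `c = (2c + R) - (c + R)`; a prime `p ∣ n` divides exactly one of `c` and `R`.
  refine ⟨(2 * c.val + R : ℕ), -(1 * c.val + R : ℕ), (ZMod.isUnit_iff_coprime _ _).mpr hu,
    ((ZMod.isUnit_iff_coprime _ _).mpr hv).neg, ?_⟩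
  push_cast
  rw [ZMod.natCast_zmod_val]
  ring

namespace ZMod

variable {n : ℕ}

theorem nontrivial_of_two_dvd (heven : 2 ∣ n) : Nontrivial (ZMod n) :=
  nontrivial_iff.mpr fun h => by simp [h] at heven

variable (heven : 2 ∣ n)

theorem castHom_two_eq_one_of_isUnit {c : ZMod n} (hc : IsUnit c) :
    castHom heven (ZMod 2) c = 1 := by
  have hunit := hc.map (castHom heven (ZMod 2))
  generalize castHom heven (ZMod 2) c = d at hunit ⊢
  revert d
  decide

theorem castHom_two_sub_one_eq_zero {c : ZMod n} (h : castHom heven (ZMod 2) c ≠ 0) :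
    castHom heven (ZMod 2) (c - 1) = 0 := by
  rw [map_sub, map_one]
  generalize castHom heven (ZMod 2) c = d at h ⊢
  revert d
  decide

variable [NeZero n]

theorem castHom_two_eq_zero_iff_exists_isUnit_add_isUnit (c : ZMod n) :
    castHom heven (ZMod 2) c = 0 ↔ ∃ u v : ZMod n, IsUnit u ∧ IsUnit v ∧ u + v = c := by
  constructor
  · intro hc
    refine exists_isUnit_add_isUnit_eq c fun _ => ?_
    rwa [castHom_apply, ← natCast_val, natCast_eq_zero_iff] at hc
  · rintro ⟨u, v, hu, hv, rfl⟩
    rw [map_add, castHom_two_eq_one_of_isUnit heven hu, castHom_two_eq_one_of_isUnit heven hv]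
    decide

theorem two_mul_card_filter_castHom_two_eq_zero :
    2 * (Finset.univ.filter fun c : ZMod n => castHom heven (ZMod 2) c = 0).card = n := by
  have hshift : (Finset.univ.filter fun c : ZMod n => castHom heven (ZMod 2) c = 0).card =
      (Finset.univ.filter fun c : ZMod n => ¬ castHom heven (ZMod 2) c = 0).card := by
    refine Finset.card_equiv (Equiv.addRight 1) fun c => ?_
    simp only [Finset.mem_filter_univ, Equiv.coe_addRight, map_add, map_one]
    generalize castHom heven (ZMod 2) c = d
    revert d
    decide
  have hsplit := Finset.card_filter_add_card_filter_not (s := Finset.univ)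
    fun c : ZMod n => castHom heven (ZMod 2) c = 0
  rw [Finset.card_univ, ZMod.card] at hsplit
  omega

end ZMod

theorem Finset.card_filter_isUnit {M : Type*} [Monoid M] [Fintype M] [DecidableEq M] :
    (Finset.univ.filter fun x : M => IsUnit x).card = Fintype.card Mˣ := by
  rw [← Finset.card_univ, ← Finset.card_map ⟨Units.val, Units.val_injective⟩]
  congr 1
  ext x
  simp [IsUnit, eq_comm]

theorem SimpleGraph.Reachable.dist_eq_two_iff {V : Type*} {G : SimpleGraph V} {u v : V}
    (h : G.Reachable u v) :
    G.dist u v = 2 ↔ u ≠ v ∧ ¬ G.Adj u v ∧ (G.commonNeighbors u v).Nonempty := by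
  rw [← edist_eq_two_iff, ← h.coe_dist_eq_edist]
  exact_mod_cast Iff.rfl

section UnitaryCayley

variable {n : ℕ} [NeZero n]

theorem ICG_one_adj_iff {a b : ZMod n} : (ICG n {1}).Adj a b ↔ a ≠ b ∧ IsUnit (a - b) := by
  have hcast : (((a.val : ℤ) - b.val : ℤ) : ZMod n) = a - b := by
    push_cast
    rw [ZMod.natCast_zmod_val, ZMod.natCast_zmod_val]
  rw [← hcast, ZMod.coe_int_isUnit_iff_isCoprime, Int.isCoprime_iff_gcd_eq_one, Int.gcd_comm]
  exact and_congr_right fun _ => Finset.mem_singleton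

theorem ICG_one_adj_iff_isUnit (heven : 2 ∣ n) {a b : ZMod n} :
    (ICG n {1}).Adj a b ↔ IsUnit (a - b) := by
  have := ZMod.nontrivial_of_two_dvd heven
  exact ICG_one_adj_iff.trans ⟨And.right, fun h => ⟨sub_ne_zero.mp h.ne_zero, h⟩⟩

theorem ICG_one_commonNeighbors_nonempty_iff (heven : 2 ∣ n) (a b : ZMod n) :
    ((ICG n {1}).commonNeighbors a b).Nonempty ↔ ZMod.castHom heven (ZMod 2) (a - b) = 0 := by
  rw [ZMod.castHom_two_eq_zero_iff_exists_isUnit_add_isUnit]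
  simp only [Set.Nonempty, SimpleGraph.mem_commonNeighbors, ICG_one_adj_iff_isUnit heven]
  constructor
  · rintro ⟨m, hu, hv⟩
    exact ⟨a - m, m - b, hu, neg_sub b m ▸ hv.neg, sub_add_sub_cancel a m b⟩
  · rintro ⟨u, v, hu, hv, huv⟩
    refine ⟨a - u, by rwa [sub_sub_cancel], ?_⟩
    rw [show b - (a - u) = -v by linear_combination huv]
    exact hv.neg

theorem ICG_one_exists_walk_length_eq_two (heven : 2 ∣ n) {a b : ZMod n}
    (h : ZMod.castHom heven (ZMod 2) (a - b) = 0) :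
    ∃ p : (ICG n {1}).Walk a b, p.length = 2 := by
  obtain ⟨m, hma, hmb⟩ := (ICG_one_commonNeighbors_nonempty_iff heven a b).mpr h
  exact ⟨.cons hma (.cons hmb.symm .nil), rfl⟩

theorem ICG_one_exists_walk_length_le_three (heven : 2 ∣ n) (a b : ZMod n) :
    ∃ p : (ICG n {1}).Walk a b, p.length ≤ 3 := by
  by_cases h : ZMod.castHom heven (ZMod 2) (a - b) = 0
  · obtain ⟨p, hp⟩ := ICG_one_exists_walk_length_eq_two heven h
    exact ⟨p, hp.trans_le (by norm_num)⟩
  · obtain ⟨p, hp⟩ := ICG_one_exists_walk_length_eq_two heven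
      (sub_right_comm a b 1 ▸ ZMod.castHom_two_sub_one_eq_zero heven h)
    have hadj : (ICG n {1}).Adj a (a - 1) :=
      (ICG_one_adj_iff_isUnit heven).mpr (by rw [sub_sub_cancel]; exact isUnit_one)
    exact ⟨.cons hadj p, by simp [hp]⟩

theorem ICG_one_dist (heven : 2 ∣ n) (a b : ZMod n) :
    (ICG n {1}).dist a b =
      if a = b then 0
      else if IsUnit (a - b) then 1
      else if ZMod.castHom heven (ZMod 2) (a - b) = 0 then 2
      else 3 := by
  obtain ⟨p, hp⟩ := ICG_one_exists_walk_length_le_three heven a b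
  have hreach : (ICG n {1}).Reachable a b := ⟨p⟩
  have hone : (ICG n {1}).dist a b = 1 ↔ IsUnit (a - b) :=
    SimpleGraph.dist_eq_one_iff_adj.trans (ICG_one_adj_iff_isUnit heven)
  have htwo : (ICG n {1}).dist a b = 2 ↔
      a ≠ b ∧ ¬ IsUnit (a - b) ∧ ZMod.castHom heven (ZMod 2) (a - b) = 0 := by
    rw [hreach.dist_eq_two_iff, ICG_one_adj_iff_isUnit heven,
      ICG_one_commonNeighbors_nonempty_iff heven]
  split_ifs with hab hunit hpar
  · rw [hab, SimpleGraph.dist_self]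
  · exact hone.mpr hunit
  · exact htwo.mpr ⟨hab, hunit, hpar⟩
  · have hle := (SimpleGraph.dist_le p).trans hp
    have hne_zero := hreach.dist_eq_zero_iff.not.mpr hab
    have hne_one := hone.not.mpr hunit
    have hne_two := htwo.not.mpr fun h => hpar h.2.2
    omega

theorem ICG_one_sum_dist (heven : 2 ∣ n) (a : ZMod n) :
    ∑ b, ((ICG n {1}).dist a b : ℝ) = 5 * (n : ℝ) / 2 - 2 * ((Nat.totient n : ℝ) + 1) := by
  have hpoint : ∀ b, ((ICG n {1}).dist a b : ℝ) = 3 - 2 * (if a = b then 1 else 0)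
      - 2 * (if IsUnit (a - b) then 1 else 0)
      - (if ZMod.castHom heven (ZMod 2) (a - b) = 0 then 1 else 0) := by
    intro b
    have := ZMod.nontrivial_of_two_dvd heven
    have hodd := fun h : IsUnit (a - b) => ZMod.castHom_two_eq_one_of_isUnit heven h
    rw [ICG_one_dist heven]
    split_ifs <;> simp_all <;> norm_num
  have hunits : ∑ b, (if IsUnit (a - b) then (1 : ℝ) else 0) = Nat.totient n := by
    refine ((Equiv.subLeft a).sum_comp fun c => if IsUnit c then (1 : ℝ) else 0).trans ?_
    rw [Finset.sum_boole, Finset.card_filter_isUnit, ZMod.card_units_eq_totient]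
  have hevens :
      ∑ b, (if ZMod.castHom heven (ZMod 2) (a - b) = 0 then (1 : ℝ) else 0) = n / 2 := by
    refine ((Equiv.subLeft a).sum_comp
      fun c => if ZMod.castHom heven (ZMod 2) c = 0 then (1 : ℝ) else 0).trans ?_
    rw [Finset.sum_boole, eq_div_iff two_ne_zero, mul_comm]
    exact_mod_cast ZMod.two_mul_card_filter_castHom_two_eq_zero heven
  simp only [hpoint, Finset.sum_sub_distrib, ← Finset.mul_sum, Finset.sum_ite_eq, hunits, hevens,
    Finset.sum_const, Finset.card_univ, ZMod.card, Finset.mem_univ, if_true, nsmul_eq_mul]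
  ring

end UnitaryCayley

theorem unitaryCayley_even_spectral_radius_general (n : ℕ) [NeZero n] (heven : 2 ∣ n) :
    (5 * (n : ℝ) / 2 - 2 * ((Nat.totient n : ℝ) + 1)) ∈ spectrum ℝ (distMatrix (ICG n {1})) ∧
    ∀ μ ∈ spectrum ℝ (distMatrix (ICG n {1})),
      μ ≤ 5 * (n : ℝ) / 2 - 2 * ((Nat.totient n : ℝ) + 1) := by
  have hrow := ICG_one_sum_dist heven
  refine ⟨Matrix.mem_spectrum_of_forall_sum_eq hrow, fun μ hμ => (le_abs_self μ).trans ?_⟩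
  refine Matrix.norm_le_of_mem_spectrum_of_forall_sum_norm_le (fun i => ?_) hμ
  simp only [distMatrix, Matrix.of_apply, Real.norm_natCast, hrow i, le_refl]

/-- for even `n` with an odd prime divisor, the distance spectral radius
(largest eigenvalue of the distance matrix) of `X_n` equals `5n/2 - 2(φ(n) + 1)`. -/
theorem unitaryCayley_even_spectral_radius (n : ℕ) [NeZero n] (heven : 2 ∣ n)
    (hodd : ∃ p : ℕ, p.Prime ∧ Odd p ∧ p ∣ n) :
    (5 * (n : ℝ) / 2 - 2 * ((Nat.totient n : ℝ) + 1)) ∈ spectrum ℝ (distMatrix (ICG n {1})) ∧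
    ∀ μ ∈ spectrum ℝ (distMatrix (ICG n {1})),
      μ ≤ 5 * (n : ℝ) / 2 - 2 * ((Nat.totient n : ℝ) + 1) :=
  unitaryCayley_even_spectral_radius_general n heven
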